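/- Let T[ρ] = Σ_k M_k ρ M_k† be a TPCP map on a finite-dimensional space H = H_S ⊕ H_R with M_{k,Q} = 0 for all k (H_S invariant). Then the set of density operators supported on H_S is globally asymptotically stable (invariant and attractive, i.e. Tr(Π_R T^t[ρ]) → 0 as t → ∞ for every density operator ρ) if and only if there is no density operator ρ fixed by T whose support is contained in ∩_k ker(M_{k,P}) ⊆ H_R. -/

import Mathlib

open Matrix Finset Filter
open scoped ComplexOrder Topology

/-!
Write `P_k` and `R_k` for the `H_R → H_S` and `H_R → H_R` blocks of `M_k`. Since `H_S` is
invariant, the `H_R` block of `T^t[ρ]` evolves under `Ψ(X) = Σ R_k X R_kᴴ`, and trace preservation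
reads `Tr Ψ(X) = Tr X - Σ Tr(P_k X P_kᴴ)`, so `Ψ` is trace-nonincreasing. A fixed state supported
on `H_R` keeps all its weight there, so attractivity fails. Conversely, if the weight `Tr Ψ^t(X)`
does not decay, it decreases to some `c > 0`; the orbit is bounded, and a limit point of its
Cesàro averages is a fixed point of `Ψ` of trace `c`. Normalised, it is a fixed state `Y` of `Ψ`
with `Σ Tr(P_k Y P_kᴴ) = 0`, i.e. `P_k Y = 0`, so `0 ⊕ Y` is a fixed state of `T` supported in
`∩_k ker P_k`.
-/

section BirkhoffAverage

variable {𝕜 E : Type*} [RCLike 𝕜] [NormedAddCommGroup E] [NormedSpace 𝕜 E]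

theorem norm_birkhoffAverage_le {α : Type*} (f : α → α) (g : α → E) {x : α} {C : ℝ}
    (hC : ∀ k, ‖g (f^[k] x)‖ ≤ C) (n : ℕ) : ‖birkhoffAverage 𝕜 f g n x‖ ≤ C := by
  rcases n.eq_zero_or_pos with rfl | hn
  · simpa using (norm_nonneg _).trans (hC 0)
  rw [birkhoffAverage, birkhoffSum, norm_smul, norm_inv, RCLike.norm_natCast]
  calc (n : ℝ)⁻¹ * ‖∑ k ∈ range n, g (f^[k] x)‖ ≤ (n : ℝ)⁻¹ * (n * C) := by
        gcongr; simpa using norm_sum_le_of_le (range n) fun k _ => hC k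
    _ = C := by field_simp

theorem exists_isFixedPt_of_isBounded_orbit [FiniteDimensional 𝕜 E] (f : E →ₗ[𝕜] E)
    {x : E} (hx : Bornology.IsBounded (Set.range fun t => f^[t] x)) :
    ∃ y, Function.IsFixedPt f y ∧ ∃ φ : ℕ → ℕ, StrictMono φ ∧
      Tendsto (fun N => birkhoffAverage 𝕜 f id (φ N) x) atTop (𝓝 y) := by
  have := FiniteDimensional.proper_rclike 𝕜 E
  obtain ⟨C, hC⟩ := isBounded_iff_forall_norm_le.1 hx
  have hball : ∀ N, birkhoffAverage 𝕜 f id N x ∈ Metric.closedBall 0 C := fun N =>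
    mem_closedBall_zero_iff.2 (norm_birkhoffAverage_le f id (fun k => hC _ ⟨k, rfl⟩) N)
  obtain ⟨y, -, φ, hφ, hlim⟩ := (isCompact_closedBall 0 C).tendsto_subseq hball
  refine ⟨y, ?_, φ, hφ, hlim⟩
  have hcomm : ∀ N, f (birkhoffAverage 𝕜 f id N x) = birkhoffAverage 𝕜 f id N (f x) := by
    intro N
    simp only [birkhoffAverage, birkhoffSum, id, map_smul, map_sum,
      ← Function.iterate_succ_apply' f, Function.iterate_succ_apply]
  have hdiff := (tendsto_birkhoffAverage_apply_sub_birkhoffAverage 𝕜 (g := id) hx).comp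
    hφ.tendsto_atTop
  have hf_lim := ((f.continuous_of_finiteDimensional.tendsto y).comp hlim).sub hlim
  simp only [Function.comp_def, hcomm] at hf_lim
  exact sub_eq_zero.1 (tendsto_nhds_unique hf_lim hdiff)

end BirkhoffAverage

theorem RCLike.exists_tendsto_ofReal_of_antitone {𝕜 : Type*} [RCLike 𝕜] {u : ℕ → 𝕜}
    (hu : Antitone u) (hu0 : ∀ t, 0 ≤ u t) : ∃ c : ℝ, Tendsto u atTop (𝓝 (c : 𝕜)) := by
  have hre : Antitone fun t => re (u t) := fun s t hst => (le_iff_re_im.1 (hu hst)).1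
  have hlim := tendsto_atTop_ciInf hre ⟨0, by rintro _ ⟨t, rfl⟩; exact (nonneg_iff.1 (hu0 t)).1⟩
  refine ⟨_, ((continuous_ofReal.tendsto _).comp hlim).congr fun t => ?_⟩
  exact ext (by simp) (by simp [(nonneg_iff.1 (hu0 t)).2])

namespace Matrix

section PosSemidef

variable {m n 𝕜 : Type*} [Fintype n] [RCLike 𝕜]

theorem isClosed_setOf_posSemidef : IsClosed {A : Matrix n n 𝕜 | A.PosSemidef} := by
  simp only [posSemidef_iff_dotProduct_mulVec, Set.ofPred_and, Set.ofPred_forall]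
  exact (isClosed_eq continuous_id.matrix_conjTranspose continuous_id).inter <|
    isClosed_iInter fun x => isClosed_le continuous_const <|
      continuous_const.dotProduct (continuous_id.matrix_mulVec continuous_const)

open scoped MatrixOrder in
theorem PosSemidef.exists_eq_conjTranspose_mul_self {A : Matrix n n 𝕜} (hA : A.PosSemidef) :
    ∃ B : Matrix n n 𝕜, A = Bᴴ * B := by
  classical
  refine ⟨CFC.sqrt A, ?_⟩
  have h := CFC.sqrt_mul_sqrt_self A hA.nonneg
  nth_rw 1 [← (CFC.sqrt_nonneg A).isSelfAdjoint.star_eq] at h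
  exact h.symm

theorem PosSemidef.mul_eq_zero_of_mul_mul_conjTranspose_eq_zero {Y : Matrix n n 𝕜}
    (hY : Y.PosSemidef) {P : Matrix m n 𝕜} (h : P * Y * Pᴴ = 0) : P * Y = 0 := by
  obtain ⟨B, rfl⟩ := hY.exists_eq_conjTranspose_mul_self
  have hBP : B * Pᴴ = 0 := by
    rw [← conjTranspose_mul_self_eq_zero, conjTranspose_mul, conjTranspose_conjTranspose, ← h]
    simp only [Matrix.mul_assoc]
  rw [← Matrix.mul_assoc, ← conjTranspose_conjTranspose P, ← conjTranspose_mul, hBP]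
  simp

section Frobenius

attribute [local instance] frobeniusNormedAddCommGroup frobeniusNormedSpace

theorem frobenius_norm_sq_eq_re_trace [Fintype m] (B : Matrix m n 𝕜) :
    ‖B‖ ^ 2 = RCLike.re (Bᴴ * B).trace := by
  rw [show ‖B‖ = ‖WithLp.toLp 2 fun i => WithLp.toLp 2 (B i)‖ from rfl, PiLp.norm_sq_eq_of_L2]
  simp only [PiLp.norm_sq_eq_of_L2]
  simp [Matrix.trace, Matrix.mul_apply, RCLike.conj_mul, Finset.sum_comm (γ := m)]

theorem PosSemidef.frobenius_norm_le_re_trace {A : Matrix n n 𝕜} (hA : A.PosSemidef) :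
    ‖A‖ ≤ RCLike.re A.trace := by
  obtain ⟨B, rfl⟩ := hA.exists_eq_conjTranspose_mul_self
  calc ‖Bᴴ * B‖ ≤ ‖Bᴴ‖ * ‖B‖ := frobenius_norm_mul _ _
    _ = RCLike.re (Bᴴ * B).trace := by
      rw [frobenius_norm_conjTranspose, ← sq, frobenius_norm_sq_eq_re_trace]

theorem exists_posSemidef_trace_eq_one_isFixedPt (Ψ : Matrix n n 𝕜 →ₗ[𝕜] Matrix n n 𝕜)
    (hpos : ∀ Z, Z.PosSemidef → (Ψ Z).PosSemidef)
    (htr : ∀ Z, Z.PosSemidef → (Ψ Z).trace ≤ Z.trace) {X : Matrix n n 𝕜} (hX : X.PosSemidef)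
    (hX0 : ¬Tendsto (fun t => (Ψ^[t] X).trace) atTop (𝓝 0)) :
    ∃ Y : Matrix n n 𝕜, Y.PosSemidef ∧ Y.trace = 1 ∧ Ψ Y = Y := by
  have hpsd : ∀ t, (Ψ^[t] X).PosSemidef := fun t => by
    induction t with
    | zero => exact hX
    | succ t ih => rw [Function.iterate_succ_apply']; exact hpos _ ih
  have hanti : Antitone fun t => (Ψ^[t] X).trace := antitone_nat_of_succ_le fun t => by
    rw [Function.iterate_succ_apply']; exact htr _ (hpsd t)
  obtain ⟨c, hc⟩ := RCLike.exists_tendsto_ofReal_of_antitone hanti fun t => (hpsd t).trace_nonneg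
  have hc0 : (c : 𝕜) ≠ 0 := fun h => hX0 (h ▸ hc)
  have hbdd : Bornology.IsBounded (Set.range fun t => Ψ^[t] X) := by
    refine isBounded_iff_forall_norm_le.2 ⟨RCLike.re X.trace, ?_⟩
    rintro _ ⟨t, rfl⟩
    exact (hpsd t).frobenius_norm_le_re_trace.trans (RCLike.le_iff_re_im.1 (hanti t.zero_le)).1
  obtain ⟨Y, hY, φ, hφ, hYlim⟩ := exists_isFixedPt_of_isBounded_orbit Ψ hbdd
  have hYpsd : Y.PosSemidef := isClosed_setOf_posSemidef.mem_of_tendsto hYlim <|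
    Eventually.of_forall fun N => (posSemidef_sum _ fun t _ => hpsd t).smul (by simp)
  have hYtr : Y.trace = c := by
    have hcesaro := hc.cesaro_smul.comp hφ.tendsto_atTop
    refine tendsto_nhds_unique ((continuous_id.matrix_trace.tendsto Y).comp hYlim) ?_
    convert hcesaro using 1
    funext N
    simp [birkhoffAverage, birkhoffSum, trace_sum, RCLike.real_smul_eq_coe_mul]
  refine ⟨(Y.trace)⁻¹ • Y, hYpsd.smul (inv_nonneg.2 hYpsd.trace_nonneg), ?_, ?_⟩
  · rw [trace_smul, smul_eq_mul, inv_mul_cancel₀ (hYtr ▸ hc0)]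
  · rw [map_smul, hY.eq]

end Frobenius

end PosSemidef

section Kraus

variable {ι m n m₁ m₂ 𝕜 : Type*} [Fintype ι] [Fintype n] [RCLike 𝕜]

def krausMap (M : ι → Matrix m n 𝕜) : Matrix n n 𝕜 →ₗ[𝕜] Matrix m m 𝕜 where
  toFun ρ := ∑ k, M k * ρ * (M k)ᴴ
  map_add' ρ σ := by simp only [Matrix.mul_add, Matrix.add_mul, sum_add_distrib]
  map_smul' c ρ := by simp only [Matrix.mul_smul, Matrix.smul_mul, smul_sum, RingHom.id_apply]

theorem krausMap_apply (M : ι → Matrix m n 𝕜) (ρ : Matrix n n 𝕜) :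
    krausMap M ρ = ∑ k, M k * ρ * (M k)ᴴ := rfl

theorem PosSemidef.krausMap [Fintype m] {ρ : Matrix n n 𝕜} (hρ : ρ.PosSemidef)
    (M : ι → Matrix m n 𝕜) : (krausMap M ρ).PosSemidef :=
  posSemidef_sum _ fun k _ => hρ.mul_mul_conjTranspose_same (M k)

theorem trace_krausMap [Fintype m] (M : ι → Matrix m n 𝕜) (ρ : Matrix n n 𝕜) :
    (krausMap M ρ).trace = ((∑ k, (M k)ᴴ * M k) * ρ).trace := by
  simp only [krausMap_apply, trace_sum, Finset.sum_mul]
  exact sum_congr rfl fun k _ => by rw [trace_mul_cycle, Matrix.mul_assoc]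

variable [Fintype m₁] [Fintype m₂] [DecidableEq n] {P : ι → Matrix m₁ n 𝕜}
  {R : ι → Matrix m₂ n 𝕜}

theorem trace_krausMap_add_trace_krausMap (hPR : ∑ k, ((P k)ᴴ * P k + (R k)ᴴ * R k) = 1)
    (ρ : Matrix n n 𝕜) : (krausMap P ρ).trace + (krausMap R ρ).trace = ρ.trace := by
  rw [trace_krausMap, trace_krausMap, ← trace_add, ← Matrix.add_mul, ← sum_add_distrib, hPR,
    Matrix.one_mul]

theorem trace_krausMap_le (hPR : ∑ k, ((P k)ᴴ * P k + (R k)ᴴ * R k) = 1) {ρ : Matrix n n 𝕜}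
    (hρ : ρ.PosSemidef) : (krausMap R ρ).trace ≤ ρ.trace := by
  rw [← trace_krausMap_add_trace_krausMap hPR]
  exact le_add_of_nonneg_left (hρ.krausMap P).trace_nonneg

theorem mul_eq_zero_of_trace_krausMap_eq (hPR : ∑ k, ((P k)ᴴ * P k + (R k)ᴴ * R k) = 1)
    {ρ : Matrix n n 𝕜} (hρ : ρ.PosSemidef) (h : (krausMap R ρ).trace = ρ.trace) (k : ι) :
    P k * ρ = 0 := by
  have hP : ∑ k, (P k * ρ * (P k)ᴴ).trace = 0 := by
    rw [← trace_sum, ← krausMap_apply]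
    simpa [h] using trace_krausMap_add_trace_krausMap hPR ρ
  have hk := (sum_eq_zero_iff_of_nonneg fun k _ =>
    (hρ.mul_mul_conjTranspose_same (P k)).trace_nonneg).1 hP k (mem_univ k)
  exact hρ.mul_eq_zero_of_mul_mul_conjTranspose_eq_zero <|
    ((hρ.mul_mul_conjTranspose_same (P k)).trace_eq_zero_iff).1 hk

end Kraus

theorem toBlocks₂₂_sum {κ l₁ l₂ o₁ o₂ α : Type*} [AddCommMonoid α] (s : Finset κ)
    (A : κ → Matrix (l₁ ⊕ l₂) (o₁ ⊕ o₂) α) :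
    (∑ k ∈ s, A k).toBlocks₂₂ = ∑ k ∈ s, (A k).toBlocks₂₂ := by
  ext i j
  simp [toBlocks₂₂, sum_apply]

section Blocks

variable {ι m₁ m₂ n₁ n₂ 𝕜 : Type*} [Fintype ι] [Fintype n₁] [Fintype n₂] [RCLike 𝕜]

theorem toBlocks₂₂_conjTranspose_mul (A : Matrix (n₁ ⊕ n₂) (m₁ ⊕ m₂) 𝕜) :
    (Aᴴ * A).toBlocks₂₂ = A.toBlocks₁₂ᴴ * A.toBlocks₁₂ + A.toBlocks₂₂ᴴ * A.toBlocks₂₂ := by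
  conv_lhs => rw [← fromBlocks_toBlocks A]
  simp [fromBlocks_conjTranspose, fromBlocks_multiply]

theorem sum_toBlocks_conjTranspose_mul_eq_one [DecidableEq m₁] [DecidableEq m₂]
    {M : ι → Matrix (n₁ ⊕ n₂) (m₁ ⊕ m₂) 𝕜} (hM : ∑ k, (M k)ᴴ * M k = 1) :
    ∑ k, ((M k).toBlocks₁₂ᴴ * (M k).toBlocks₁₂ + (M k).toBlocks₂₂ᴴ * (M k).toBlocks₂₂) = 1 := by
  have h22 := congrArg toBlocks₂₂ hM
  rw [toBlocks₂₂_sum, ← fromBlocks_one, toBlocks_fromBlocks₂₂] at h22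
  simpa only [toBlocks₂₂_conjTranspose_mul] using h22

theorem toBlocks₂₂_mul_mul_conjTranspose {A : Matrix (m₁ ⊕ m₂) (n₁ ⊕ n₂) 𝕜}
    (hA : A.toBlocks₂₁ = 0) (σ : Matrix (n₁ ⊕ n₂) (n₁ ⊕ n₂) 𝕜) :
    (A * σ * Aᴴ).toBlocks₂₂ = A.toBlocks₂₂ * σ.toBlocks₂₂ * A.toBlocks₂₂ᴴ := by
  conv_lhs => rw [← fromBlocks_toBlocks A, ← fromBlocks_toBlocks σ, hA]
  simp [fromBlocks_conjTranspose, fromBlocks_multiply]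

theorem toBlocks₂₂_krausMap {M : ι → Matrix (m₁ ⊕ m₂) (n₁ ⊕ n₂) 𝕜}
    (hM : ∀ k, (M k).toBlocks₂₁ = 0) (σ : Matrix (n₁ ⊕ n₂) (n₁ ⊕ n₂) 𝕜) :
    (krausMap M σ).toBlocks₂₂ = krausMap (fun k => (M k).toBlocks₂₂) σ.toBlocks₂₂ := by
  rw [krausMap_apply, krausMap_apply, toBlocks₂₂_sum]
  exact sum_congr rfl fun k _ => toBlocks₂₂_mul_mul_conjTranspose (hM k) σ

theorem mul_fromBlocks_zero_mul_conjTranspose {A : Matrix (m₁ ⊕ m₂) (n₁ ⊕ n₂) 𝕜}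
    (hA : A.toBlocks₂₁ = 0) {Y : Matrix n₂ n₂ 𝕜} (hYh : Y.IsHermitian)
    (hY : A.toBlocks₁₂ * Y = 0) :
    A * fromBlocks (0 : Matrix n₁ n₁ 𝕜) 0 0 Y * Aᴴ =
      fromBlocks 0 0 0 (A.toBlocks₂₂ * Y * A.toBlocks₂₂ᴴ) := by
  have hY' : Y * A.toBlocks₁₂ᴴ = 0 := by
    rw [← hYh.eq, ← conjTranspose_mul, hY, conjTranspose_zero]
  conv_lhs => rw [← fromBlocks_toBlocks A, hA]
  simp [fromBlocks_conjTranspose, fromBlocks_multiply, Matrix.mul_assoc, hY, hY']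

theorem krausMap_fromBlocks_zero {M : ι → Matrix (m₁ ⊕ m₂) (n₁ ⊕ n₂) 𝕜}
    (hM : ∀ k, (M k).toBlocks₂₁ = 0) {Y : Matrix n₂ n₂ 𝕜} (hYh : Y.IsHermitian)
    (hY : ∀ k, (M k).toBlocks₁₂ * Y = 0) :
    krausMap M (fromBlocks 0 0 0 Y) =
      fromBlocks 0 0 0 (krausMap (fun k => (M k).toBlocks₂₂) Y) := by
  rw [krausMap_apply, krausMap_apply,
    sum_congr rfl fun k _ => mul_fromBlocks_zero_mul_conjTranspose (hM k) hYh (hY k)]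
  ext (i | i) (j | j) <;> simp [sum_apply]

theorem PosSemidef.fromBlocks_zero {Y : Matrix n₂ n₂ 𝕜} (hY : Y.PosSemidef) :
    (fromBlocks (0 : Matrix n₁ n₁ 𝕜) 0 0 Y).PosSemidef := by
  obtain ⟨B, rfl⟩ := hY.exists_eq_conjTranspose_mul_self
  simpa [fromBlocks_conjTranspose, fromBlocks_multiply] using
    posSemidef_conjTranspose_mul_self (fromBlocks (0 : Matrix n₁ n₁ 𝕜) 0 0 B)

theorem trace_eq_trace_toBlocks₁₁_add_trace_toBlocks₂₂ (σ : Matrix (n₁ ⊕ n₂) (n₁ ⊕ n₂) 𝕜) :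
    σ.trace = σ.toBlocks₁₁.trace + σ.toBlocks₂₂.trace := by
  simp [trace, Fintype.sum_sum_type, toBlocks₁₁, toBlocks₂₂]

theorem trace_fromBlocks_zero_one_mul [DecidableEq n₂] (σ : Matrix (n₁ ⊕ n₂) (n₁ ⊕ n₂) 𝕜) :
    (fromBlocks 0 0 0 (1 : Matrix n₂ n₂ 𝕜) * σ).trace = σ.toBlocks₂₂.trace := by
  conv_lhs => rw [← fromBlocks_toBlocks σ]
  simp [fromBlocks_multiply, trace_eq_trace_toBlocks₁₁_add_trace_toBlocks₂₂]

theorem trace_fromBlocks_zero_one_mul_iterate_krausMap [DecidableEq n₂]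
    {M : ι → Matrix (n₁ ⊕ n₂) (n₁ ⊕ n₂) 𝕜} (hM : ∀ k, (M k).toBlocks₂₁ = 0) (t : ℕ)
    (σ : Matrix (n₁ ⊕ n₂) (n₁ ⊕ n₂) 𝕜) :
    (fromBlocks 0 0 0 (1 : Matrix n₂ n₂ 𝕜) * (krausMap M)^[t] σ).trace =
      ((krausMap fun k => (M k).toBlocks₂₂)^[t] σ.toBlocks₂₂).trace := by
  rw [trace_fromBlocks_zero_one_mul,
    (Function.Semiconj.iterate_right (toBlocks₂₂_krausMap hM) t).eq]

end Blocks

end Matrix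

/-- with `H_S` invariant, the states supported on `H_S` are GAS
iff there is no fixed density operator whose support is contained in
`∩_k ker(M_{k,P}) ⊆ H_R`. -/
theorem GAS_iff_no_fixed_state_in_kernels
    (m r K : ℕ)
    (M : Fin K → Matrix (Fin m ⊕ Fin r) (Fin m ⊕ Fin r) ℂ)
    (hTP : ∑ k, (M k)ᴴ * M k = 1)
    (hQ : ∀ k, (M k).toBlocks₂₁ = 0) :
    (∀ ρ : Matrix (Fin m ⊕ Fin r) (Fin m ⊕ Fin r) ℂ,
        ρ.PosSemidef → ρ.trace = 1 →
        Tendsto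
          (fun t : ℕ =>
            (Matrix.fromBlocks 0 0 0 (1 : Matrix (Fin r) (Fin r) ℂ) *
              ((fun σ => ∑ k, M k * σ * (M k)ᴴ)^[t] ρ)).trace)
          atTop (nhds 0)) ↔
    ¬ ∃ ρ : Matrix (Fin m ⊕ Fin r) (Fin m ⊕ Fin r) ℂ,
        ρ.PosSemidef ∧ ρ.trace = 1 ∧
        ρ.toBlocks₁₁ = 0 ∧ ρ.toBlocks₁₂ = 0 ∧ ρ.toBlocks₂₁ = 0 ∧
        (∀ k, (M k).toBlocks₁₂ * ρ.toBlocks₂₂ = 0) ∧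
        (∑ k, M k * ρ * (M k)ᴴ) = ρ := by
  have hPR := sum_toBlocks_conjTranspose_mul_eq_one hTP
  rw [show (fun σ => ∑ k, M k * σ * (M k)ᴴ) = krausMap M from rfl]
  constructor
  · rintro hGAS ⟨ρ, hρ, htr, h11, -, -, -, hfix⟩
    have hweight : ∀ t, (fromBlocks 0 0 0 (1 : Matrix (Fin r) (Fin r) ℂ) *
        (krausMap M)^[t] ρ).trace = 1 := fun t => by
      rw [Function.iterate_fixed hfix, trace_fromBlocks_zero_one_mul, ← htr,
        trace_eq_trace_toBlocks₁₁_add_trace_toBlocks₂₂ ρ, h11, trace_zero, zero_add]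
    have hlim := hGAS ρ hρ htr
    simp only [hweight] at hlim
    exact one_ne_zero (tendsto_nhds_unique tendsto_const_nhds hlim)
  · intro hno ρ hρ htr
    by_contra hne
    simp only [trace_fromBlocks_zero_one_mul_iterate_krausMap hQ] at hne
    obtain ⟨Y, hY, hYtr, hYfix⟩ := exists_posSemidef_trace_eq_one_isFixedPt _
      (fun Z hZ => hZ.krausMap _) (fun Z hZ => trace_krausMap_le hPR hZ) (hρ.submatrix Sum.inr) hne
    have hPY := mul_eq_zero_of_trace_krausMap_eq hPR hY (by rw [hYfix])
    refine hno ⟨fromBlocks 0 0 0 Y, hY.fromBlocks_zero, ?_, rfl, rfl, rfl, hPY, ?_⟩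
    · simp [trace_eq_trace_toBlocks₁₁_add_trace_toBlocks₂₂, hYtr]
    · rw [← krausMap_apply, krausMap_fromBlocks_zero hQ hY.isHermitian hPY, hYfix]
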